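/- The sequential compound of short partizan games is associative: for all short games G, H, J, we have (G → H) → J identical to G → (H → J). -/

import Mathlib

namespace SetTheory

universe u

/-- Pre-games (as in Mathlib's former `SetTheory.PGame`, removed from Mathlib). -/
inductive PGame : Type (u + 1)
  | mk : ∀ α β : Type u, (α → PGame) → (β → PGame) → PGame

namespace PGame

/-- The type of left moves. -/
def LeftMoves : PGame → Type u
  | mk l _ _ _ => l

/-- The type of right moves. -/
def RightMoves : PGame → Type u
  | mk _ r _ _ => r

/-- The new game after Left makes a move. -/
def moveLeft : ∀ g : PGame, LeftMoves g → PGame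
  | mk _ _ L _ => L

/-- The new game after Right makes a move. -/
def moveRight : ∀ g : PGame, RightMoves g → PGame
  | mk _ _ _ R => R

instance : Zero PGame := ⟨⟨PEmpty, PEmpty, PEmpty.elim, PEmpty.elim⟩⟩

/-- Identity of pre-games (equality of game trees up to relabelling of moves). -/
def Identical : PGame.{u} → PGame.{u} → Prop
  | mk _ _ xL xR, mk _ _ yL yR =>
    Relator.BiTotal (fun i j ↦ Identical (xL i) (yL j)) ∧
      Relator.BiTotal (fun i j ↦ Identical (xR i) (yR j))

scoped infix:50 " ≡ " => PGame.Identical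

/-- Negation of pre-games. -/
def neg : PGame → PGame
  | ⟨l, r, L, R⟩ => ⟨r, l, fun i => neg (R i), fun i => neg (L i)⟩

instance : Neg PGame := ⟨neg⟩

/-- Auxiliary for addition: `x + y` by recursion on `y`, given `xL i + ·` and `xR j + ·`. -/
def addAux (xl xr : Type u) (fL : xl → PGame.{u} → PGame.{u}) (fR : xr → PGame.{u} → PGame.{u}) :
    PGame.{u} → PGame.{u}
  | mk yl yr yL yR =>
    mk (xl ⊕ yl) (xr ⊕ yr) (Sum.elim (fun i => fL i (mk yl yr yL yR)) (fun j => addAux xl xr fL fR (yL j)))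
      (Sum.elim (fun i => fR i (mk yl yr yL yR)) (fun j => addAux xl xr fL fR (yR j)))

/-- Disjunctive sum of pre-games. -/
def add : PGame.{u} → PGame.{u} → PGame.{u}
  | mk xl xr xL xR => addAux xl xr (fun i => add (xL i)) (fun j => add (xR j))

instance : Add PGame.{u} := ⟨add⟩

instance : Sub PGame := ⟨fun x y => x + -y⟩

/-- The pre-game `⋆ = {0 | 0}`. -/
def star : PGame.{u} := ⟨PUnit, PUnit, fun _ => 0, fun _ => 0⟩

/-- A short game: finitely many positions, with decidable equality on move types. -/
class inductive Short : PGame.{u} → Type (u + 1)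
  | mk :
    ∀ {α β : Type u} {L : α → PGame.{u}} {R : β → PGame.{u}} (_ : ∀ i : α, Short (L i))
      (_ : ∀ j : β, Short (R j)) [Fintype α] [Fintype β] [DecidableEq α] [DecidableEq β],
      Short ⟨α, β, L, R⟩

end PGame

end SetTheory

open SetTheory

open scoped PGame

namespace SeqCompound

open Classical in
/-- The sequential compound `G → H` of two pregames. -/
noncomputable def seqc : PGame → PGame → PGame
  | PGame.mk α β L R, H =>
    if Nonempty α then
      if Nonempty β then
        PGame.mk α β (fun a => seqc (L a) H) (fun b => seqc (R b) H)
      else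
        PGame.mk α H.RightMoves (fun a => seqc (L a) H) H.moveRight
    else
      if Nonempty β then
        PGame.mk H.LeftMoves β H.moveLeft (fun b => seqc (R b) H)
      else H

/-- A pregame is dicotic (all-small) if in every subposition,
Left has an option iff Right has an option. -/
def Dicotic : PGame → Prop
  | PGame.mk α β L R =>
    (Nonempty α ↔ Nonempty β) ∧ (∀ a, Dicotic (L a)) ∧ (∀ b, Dicotic (R b))

/-- The canonical nonnegative integer game `{n-1 | }`. -/
def intGame : ℕ → PGame
  | 0 => 0
  | n + 1 => PGame.mk PUnit PEmpty (fun _ => intGame n) PEmpty.elim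

/-- `upSum k` is the disjunctive sum `↑¹ + ↑² + ⋯ + ↑ᵏ`. -/
def upSum : ℕ → PGame
  | 0 => 0
  | k + 1 => upSum k +
      PGame.mk PUnit PUnit (fun _ => 0) (fun _ => PGame.star - upSum k)

/-- `upPow k` is the game `↑^(k+1) = {0 | ∗ - (↑¹ + ⋯ + ↑ᵏ)}`. -/
def upPow (k : ℕ) : PGame :=
  PGame.mk PUnit PUnit (fun _ => 0) (fun _ => PGame.star - upSum k)

/-- Sequential compound of a list of games. -/
noncomputable def seqList : List PGame → PGame
  | [] => 0
  | G :: l => seqc G (seqList l)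

end SeqCompound

/-!
Each side of `G → H` follows one rule: if `G` has options on that side, compound each of them
with `H`, otherwise take the options of `H` on that side. Applying this rule twice is associative,
so by induction on `G` the games `(G → H) → J` and `G → (H → J)` are even equal as pregames.
-/

namespace SetTheory.PGame

universe u

@[refl] theorem Identical.refl : ∀ x : PGame.{u}, x ≡ x
  | mk _ _ L R => by
    rw [Identical]
    exact ⟨⟨fun i => ⟨i, Identical.refl (L i)⟩, fun i => ⟨i, Identical.refl (L i)⟩⟩,
      ⟨fun i => ⟨i, Identical.refl (R i)⟩, fun i => ⟨i, Identical.refl (R i)⟩⟩⟩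

abbrev Options : Type (u + 1) := Σ ι : Type u, ι → PGame.{u}

def leftOptions (G : PGame.{u}) : Options := ⟨G.LeftMoves, G.moveLeft⟩

def rightOptions (G : PGame.{u}) : Options := ⟨G.RightMoves, G.moveRight⟩

theorem ext_options {G G' : PGame.{u}} (hL : leftOptions G = leftOptions G')
    (hR : rightOptions G = rightOptions G') : G = G' := by
  obtain ⟨α, β, L, R⟩ := G
  obtain ⟨α', β', L', R'⟩ := G'
  obtain ⟨rfl, hL⟩ := Sigma.mk.inj hL
  obtain ⟨rfl, hR⟩ := Sigma.mk.inj hR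
  cases eq_of_heq hL
  cases eq_of_heq hR
  rfl

open Classical in
noncomputable def Options.mapOrElse (s : Options.{u}) (f : PGame.{u} → PGame.{u})
    (t : Options.{u}) : Options.{u} :=
  if Nonempty s.1 then ⟨s.1, f ∘ s.2⟩ else t

theorem Options.mapOrElse_of_nonempty {s t : Options.{u}} (f : PGame.{u} → PGame.{u})
    (h : Nonempty s.1) : s.mapOrElse f t = ⟨s.1, f ∘ s.2⟩ :=
  if_pos h

theorem Options.mapOrElse_of_isEmpty {s : Options.{u}} (f : PGame.{u} → PGame.{u})
    (t : Options.{u}) (h : IsEmpty s.1) : s.mapOrElse f t = t :=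
  if_neg (not_nonempty_iff.mpr h)

theorem Options.mapOrElse_mapOrElse (s t u : Options.{u}) (f g : PGame.{u} → PGame.{u}) :
    (s.mapOrElse f t).mapOrElse g u = s.mapOrElse (g ∘ f) (t.mapOrElse g u) := by
  cases isEmpty_or_nonempty s.1 with
  | inl hs => rw [mapOrElse_of_isEmpty f t hs, mapOrElse_of_isEmpty _ _ hs]
  | inr hs =>
    rw [mapOrElse_of_nonempty f hs, mapOrElse_of_nonempty _ hs]
    exact mapOrElse_of_nonempty (s := ⟨s.1, f ∘ s.2⟩) g hs

theorem Options.mapOrElse_congr {s t : Options.{u}} {f f' : PGame.{u} → PGame.{u}}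
    (h : ∀ i, f (s.2 i) = f' (s.2 i)) : s.mapOrElse f t = s.mapOrElse f' t := by
  simp only [mapOrElse, Function.comp_def, h]

end SetTheory.PGame

namespace SeqCompound

open PGame

theorem leftOptions_seqc (G H : PGame) :
    leftOptions (seqc G H) = (leftOptions G).mapOrElse (seqc · H) (leftOptions H) := by
  obtain ⟨α, β, L, R⟩ := G
  rw [seqc]
  unfold Options.mapOrElse
  split_ifs <;> first | rfl | contradiction

theorem rightOptions_seqc (G H : PGame) :
    rightOptions (seqc G H) = (rightOptions G).mapOrElse (seqc · H) (rightOptions H) := by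
  obtain ⟨α, β, L, R⟩ := G
  rw [seqc]
  unfold Options.mapOrElse
  split_ifs <;> first | rfl | contradiction

theorem seqc_seqc (G H J : PGame) : seqc (seqc G H) J = seqc G (seqc H J) := by
  induction G with
  | mk α β L R ihL ihR =>
    apply ext_options
    · simp only [leftOptions_seqc, Options.mapOrElse_mapOrElse]
      exact Options.mapOrElse_congr ihL
    · simp only [rightOptions_seqc, Options.mapOrElse_mapOrElse]
      exact Options.mapOrElse_congr ihR

end SeqCompound

open SeqCompound in
theorem seqc_assoc_general (G H J : PGame) :
    seqc (seqc G H) J ≡ seqc G (seqc H J) := by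
  rw [seqc_seqc]

open SeqCompound in
/-- the sequential compound is associative (as game trees). -/
theorem seqc_assoc (G H J : PGame) [PGame.Short G] [PGame.Short H] [PGame.Short J] :
    seqc (seqc G H) J ≡ seqc G (seqc H J) :=
  seqc_assoc_general G H J
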